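/- For any Horn PCL theory Δ, if σ ∈ ⟦Δ⟧ then for every atom a occurring in σ, Δ ⊢ a in PCL natural deduction. -/
import Mathlib


/-- Formulae of Propositional Contract Logic over atoms `A`. -/
inductive PCLForm (A : Type) : Type
  | atom : A → PCLForm A
  | top  : PCLForm A
  | and  : PCLForm A → PCLForm A → PCLForm A
  | imp  : PCLForm A → PCLForm A → PCLForm A
  | cimp : PCLForm A → PCLForm A → PCLForm A

/-- Natural deduction for PCL: intuitionistic rules plus (↠I1), (↠I2), (↠E). -/
inductive PCLProves {A : Type} : Set (PCLForm A) → PCLForm A → Prop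
  | ax {Δ p} : p ∈ Δ → PCLProves Δ p
  | topI {Δ} : PCLProves Δ .top
  | andI {Δ p q} : PCLProves Δ p → PCLProves Δ q → PCLProves Δ (.and p q)
  | andE1 {Δ p q} : PCLProves Δ (.and p q) → PCLProves Δ p
  | andE2 {Δ p q} : PCLProves Δ (.and p q) → PCLProves Δ q
  | impI {Δ p q} : PCLProves (insert p Δ) q → PCLProves Δ (.imp p q)
  | impE {Δ p q} : PCLProves Δ (.imp p q) → PCLProves Δ p → PCLProves Δ q
  | cimpI1 {Δ p q} : PCLProves Δ q → PCLProves Δ (.cimp p q)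
  | cimpI2 {Δ p q p' q'} : PCLProves Δ (.cimp p' q') → PCLProves (insert p Δ) p' →
      PCLProves (insert q' Δ) (.cimp p q) → PCLProves Δ (.cimp p q)
  | cimpE {Δ p q} : PCLProves Δ (.cimp p q) → PCLProves (insert q Δ) p → PCLProves Δ q

/-- A Horn PCL clause: a set of premise atoms, a flag telling whether the
implication is contractual (↠, `ctr = true`) or intuitionistic (→, `ctr = false`),
and a head atom. An atomic fact `a` is the clause `⊤ → a`, i.e. `⟨∅, false, a⟩`. -/
structure HornClause (A : Type) where
  prem : Finset A
  ctr : Bool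
  head : A
deriving DecidableEq

/-- Remove duplicates from the right (keep the leftmost occurrence). -/
def rdedup {A : Type} [DecidableEq A] : List A → List A
  | [] => []
  | x :: l => x :: (rdedup l).filter (· ≠ x)

/-- Proof traces of a Horn PCL theory (Def. of ⟦Δ⟧):
(ε) the empty trace; (→) append the head of an intuitionistic clause whose
premises all occur in the trace; (↠) insert, at any position, the head `a` of a
contractual clause into a trace of `Δ, a` in which all the premises occur
(duplicates removed from the right). -/
inductive Trace {A : Type} [DecidableEq A] : Set (HornClause A) → List A → Prop
  | nil {Δ} : Trace Δ []
  | imp {Δ : Set (HornClause A)} {X : Finset A} {a : A} {σ : List A} :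
      (⟨X, false, a⟩ : HornClause A) ∈ Δ → Trace Δ σ → (∀ x ∈ X, x ∈ σ) →
      Trace Δ (rdedup (σ ++ [a]))
  | cimp {Δ : Set (HornClause A)} {X : Finset A} {a : A} {σ u v : List A} :
      (⟨X, true, a⟩ : HornClause A) ∈ Δ →
      Trace (insert (⟨∅, false, a⟩ : HornClause A) Δ) σ → (∀ x ∈ X, x ∈ σ) →
      σ = u ++ v → Trace Δ (rdedup (u ++ a :: v))

/-- The conjunction of a finite set of atoms (⊤ when empty). -/
noncomputable def conjOf {A : Type} (X : Finset A) : PCLForm A :=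
  X.toList.foldr (fun x f => .and (.atom x) f) .top

/-- The PCL formula corresponding to a Horn clause. -/
noncomputable def HornClause.toForm {A : Type} (c : HornClause A) : PCLForm A :=
  if c.ctr then .cimp (conjOf c.prem) (.atom c.head)
  else .imp (conjOf c.prem) (.atom c.head)

lemma mem_rdedup {A : Type} [DecidableEq A] {a : A} :
    ∀ {l : List A}, a ∈ rdedup l ↔ a ∈ l := by
  intro l
  induction l with
  | nil => simp [rdedup]
  | cons x l ih =>
    simp only [rdedup, List.mem_cons, List.mem_filter, ih]
    by_cases h : a = x <;> simp [h]

lemma PCLProves.mono {A : Type} {Γ Γ' : Set (PCLForm A)} {p : PCLForm A}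
    (h : PCLProves Γ p) (hs : Γ ⊆ Γ') : PCLProves Γ' p := by
  induction h generalizing Γ' with
  | ax hp => exact .ax (hs hp)
  | topI => exact .topI
  | andI _ _ ih1 ih2 => exact .andI (ih1 hs) (ih2 hs)
  | andE1 _ ih => exact .andE1 (ih hs)
  | andE2 _ ih => exact .andE2 (ih hs)
  | impI _ ih => exact .impI (ih (Set.insert_subset_insert hs))
  | impE _ _ ih1 ih2 => exact .impE (ih1 hs) (ih2 hs)
  | cimpI1 _ ih => exact .cimpI1 (ih hs)
  | cimpI2 _ _ _ ih1 ih2 ih3 =>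
      exact .cimpI2 (ih1 hs) (ih2 (Set.insert_subset_insert hs))
        (ih3 (Set.insert_subset_insert hs))
  | cimpE _ _ ih1 ih2 => exact .cimpE (ih1 hs) (ih2 (Set.insert_subset_insert hs))

lemma PCLProves.cut {A : Type} {Γ : Set (PCLForm A)} {p q : PCLForm A}
    (h1 : PCLProves (insert p Γ) q) (h2 : PCLProves Γ p) : PCLProves Γ q :=
  .impE (.impI h1) h2

lemma conj_prove {A : Type} {Γ : Set (PCLForm A)} (X : Finset A)
    (h : ∀ x ∈ X, PCLProves Γ (.atom x)) : PCLProves Γ (conjOf X) := by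
  have key : ∀ l : List A, (∀ x ∈ l, PCLProves Γ (.atom x)) →
      PCLProves Γ (l.foldr (fun x f => .and (.atom x) f) .top) := by
    intro l
    induction l with
    | nil => exact fun _ => .topI
    | cons y l ih =>
        exact fun h' => .andI (h' y (by simp)) (ih fun x hx => h' x (by simp [hx]))
  exact key X.toList fun x hx => h x (Finset.mem_toList.mp hx)

lemma conjOf_empty {A : Type} : conjOf (∅ : Finset A) = .top := by
  simp [conjOf]

/-- every atom occurring in a proof trace of a Horn PCL theory Δ
is provable from Δ in PCL natural deduction. -/
theorem trace_atoms_provable {A : Type} [DecidableEq A]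
    (Δ : Set (HornClause A)) (σ : List A) (a : A)
    (hσ : Trace Δ σ) (ha : a ∈ σ) :
    PCLProves (HornClause.toForm '' Δ) (.atom a) := by
  induction hσ generalizing a with
  | nil => simp at ha
  | @imp Δ X b σ hc _ hX ih =>
      rw [mem_rdedup] at ha
      rcases List.mem_append.mp ha with h | h
      · exact ih a h
      · simp only [List.mem_singleton] at h
        subst h
        have hform : ((⟨X, false, a⟩ : HornClause A).toForm) ∈ HornClause.toForm '' Δ :=
          Set.mem_image_of_mem _ hc
        simp only [HornClause.toForm] at hform
        exact .impE (.ax hform) (conj_prove X fun x hx => ih x (hX x hx))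
  | @cimp Δ X b σ u v hc _ hX hσuv ih =>
      -- facts about contexts
      set Γ : Set (PCLForm A) := HornClause.toForm '' Δ with hΓ
      have himg : HornClause.toForm '' (insert (⟨∅, false, b⟩ : HornClause A) Δ)
          = insert (.imp .top (.atom b)) Γ := by
        rw [Set.image_insert_eq]
        congr 1
        simp [HornClause.toForm, conjOf_empty]
      rw [himg] at ih
      -- provability of b from Γ
      have hbΓ : PCLProves Γ (.atom b) := by
        have hform : ((⟨X, true, b⟩ : HornClause A).toForm) ∈ Γ :=
          Set.mem_image_of_mem _ hc
        simp only [HornClause.toForm] at hform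
        refine .cimpE (.ax hform) ?_
        refine conj_prove X fun x hx => ?_
        have hx' := ih x (hX x hx)
        refine PCLProves.cut (hx'.mono (Set.insert_subset_insert (Set.subset_insert _ _))) ?_
        exact .impI (.ax (Set.mem_insert_of_mem _ (Set.mem_insert _ _)))
      rw [mem_rdedup] at ha
      have ha' : a = b ∨ a ∈ σ := by
        rcases List.mem_append.mp ha with h | h
        · exact Or.inr (hσuv ▸ List.mem_append.mpr (Or.inl h))
        · rcases List.mem_cons.mp h with h | h
          · exact Or.inl h
          · exact Or.inr (hσuv ▸ List.mem_append.mpr (Or.inr h))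
      rcases ha' with rfl | h
      · exact hbΓ
      · exact PCLProves.cut (ih a h) (.impI (hbΓ.mono (Set.subset_insert _ _)))
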